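/- arXiv:2310.07524 — 2 statements merged into one kernel-verified Lean document; each statement's English description precedes it below -/
import Mathlib

section
/- Let δ ≥ 2 and 1 ≤ t ≤ δ−1 be integers. Let K be a field, n an integer with n ≥ 3δ + t − 1, ξ ∈ K a primitive n-th root of unity, and i₀ an integer. Let c : Fin n → K be nonzero and suppose that ∑_{l=0}^{n−1} c_l ξ^{(i₀+e)·l} = 0 for every e in Z := {0,…,δ+t−2} ∪ {δ+t,…,2δ+t−2} ∪ {2δ+2t−1,…,3δ+t−2}. Then the Hamming weight of c is at least 2δ. -/
/-!
Let `s` be the support of `c`, `x_j = ξ^j` and `a_j = c_j ξ^{i₀ j}`, so that the hypotheses speak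
about the power sums `S_e = ∑_{j ∈ s} a_j x_j^e`, and suppose `|s| < 2δ`. Put `k = δ + t - 1`.
The zero pattern says that the syndrome polynomial `∑_{e < k + 2δ} S_e X^e` equals
`X^k (u + X^δ G)` with `u = S_k` and `deg G < t`. The key equation of BCH decoding,
`Λ · ∑_{e<N} S_e X^e ≡ Ω (mod X^N)` for the error locator `Λ = ∏ (1 - x_j X)` and the error
evaluator `Ω` (of degree `< |s|`), then forces `X^k ∣ Ω`, hence `k < |s|`; if `u = 0` it even
forces `X^{k+δ} ∣ Ω`, which is impossible. If `u ≠ 0`, multiplying the congruence by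
`u - X^δ G` kills `X^δ G` modulo `X^{2δ}`, and degrees turn it into the identity
`u² Λ = (Ω / X^k) (u - X^δ G)`. As `Ω` does not vanish at the roots `x_j⁻¹` of `Λ`, all `|s|` of
them are roots of `u - X^δ G`, a nonzero polynomial of degree `≤ k`: so `|s| ≤ k`.
-/

open Polynomial Finset

section CommRing

variable {R ι : Type*} [CommRing R] (s : Finset ι) (a x : ι → R)

noncomputable def powerSum (e : ℕ) : R := ∑ j ∈ s, a j * x j ^ e

noncomputable def errorLocator : R[X] := ∏ j ∈ s, (1 - C (x j) * X)

theorem natDegree_prod_one_sub_C_mul_X_le (t : Finset ι) :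
    (∏ j ∈ t, (1 - C (x j) * X)).natDegree ≤ #t := by
  refine (natDegree_prod_le _ _).trans <|
    (sum_le_sum fun j _ => ?_).trans_eq (card_eq_sum_ones t).symm
  compute_degree

theorem natDegree_errorLocator_le : (errorLocator s x).natDegree ≤ #s :=
  natDegree_prod_one_sub_C_mul_X_le x s

variable [DecidableEq ι]

noncomputable def errorEvaluator : R[X] :=
  ∑ j ∈ s, C (a j) * ∏ k ∈ s.erase j, (1 - C (x k) * X)

theorem natDegree_errorEvaluator_lt (hs : s.Nonempty) :
    (errorEvaluator s a x).natDegree < #s := by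
  suffices (errorEvaluator s a x).natDegree ≤ #s - 1 by have := hs.card_pos; omega
  refine natDegree_sum_le_of_forall_le _ _ fun j hj => (natDegree_C_mul_le _ _).trans ?_
  simpa [card_erase_of_mem hj] using natDegree_prod_one_sub_C_mul_X_le x (s.erase j)

theorem X_pow_dvd_errorLocator_mul_sub_errorEvaluator (N : ℕ) :
    X ^ N ∣ errorLocator s x * ∑ e ∈ range N, C (powerSum s a x e) * X ^ e
      - errorEvaluator s a x := by
  have hT : ∑ e ∈ range N, C (powerSum s a x e) * X ^ e
      = ∑ j ∈ s, C (a j) * ∑ e ∈ range N, (C (x j) * X) ^ e := by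
    simp only [powerSum, map_sum, sum_mul, mul_sum]
    rw [sum_comm]
    refine sum_congr rfl fun j _ => sum_congr rfl fun e _ => ?_
    simp only [map_mul, map_pow, mul_pow]
    ring
  have hsplit : errorLocator s x * ∑ e ∈ range N, C (powerSum s a x e) * X ^ e
      - errorEvaluator s a x = ∑ j ∈ s, C (a j) * (∏ k ∈ s.erase j, (1 - C (x k) * X)) *
        ((1 - C (x j) * X) * ∑ e ∈ range N, (C (x j) * X) ^ e - 1) := by
    rw [hT, errorEvaluator, mul_sum, ← sum_sub_distrib]
    refine sum_congr rfl fun j hj => ?_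
    rw [errorLocator, ← mul_prod_erase s _ hj]
    ring
  rw [hsplit]
  refine dvd_sum fun j _ => Dvd.dvd.mul_left ?_ _
  rw [mul_neg_geom_sum, sub_sub_cancel_left, mul_pow]
  exact (dvd_mul_left _ _).neg_right

end CommRing

theorem sum_range_C_mul_X_pow_eq_of_gaps {R : Type*} [CommRing R] {S : ℕ → R} {k δ t : ℕ}
    (hδ : 0 < δ) (ht : t ≤ δ)
    (hS : ∀ e < k + 2 * δ, e ≠ k → (e < k + δ ∨ k + δ + t ≤ e) → S e = 0) :
    ∑ e ∈ range (k + 2 * δ), C (S e) * X ^ e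
      = C (S k) * X ^ k + X ^ (k + δ) * ∑ l ∈ range t, C (S (k + δ + l)) * X ^ l := by
  ext m
  simp only [finsetSum_coeff, coeff_C_mul, coeff_X_pow, coeff_add, coeff_X_pow_mul', mul_ite,
    mul_one, mul_zero, sum_ite_eq, mem_range]
  split_ifs with hmN hmk hδm hmt <;> try simp only [zero_add, add_zero]
  all_goals first
    | omega
    | (subst hmk; rfl)
    | exact congrArg S (by omega)
    | exact hS m hmN hmk (by omega)

section Field

variable {K ι : Type*} [Field K] {s : Finset ι}

theorem eq_of_X_pow_dvd_sub {p q : K[X]} {n : ℕ} (h : X ^ n ∣ p - q) (hp : p.natDegree < n)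
    (hq : q.natDegree < n) : p = q := by
  refine sub_eq_zero.mp (eq_zero_of_dvd_of_natDegree_lt h ?_)
  rw [natDegree_X_pow]
  exact (natDegree_sub_le p q).trans_lt (max_lt hp hq)

theorem C_sq_mul_eq_of_X_pow_dvd {σ P G : K[X]} {u : K} {k δ : ℕ}
    (h : X ^ (k + 2 * δ) ∣ σ * (C u * X ^ k + X ^ (k + δ) * G) - X ^ k * P)
    (hσ : σ.natDegree < 2 * δ) (hPG : (P * (C u - X ^ δ * G)).natDegree < 2 * δ) :
    C (u ^ 2) * σ = P * (C u - X ^ δ * G) := by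
  have h' : X ^ (2 * δ) ∣ σ * (C u + X ^ δ * G) - P := by
    rw [pow_add, show σ * (C u * X ^ k + X ^ (k + δ) * G) - X ^ k * P
      = X ^ k * (σ * (C u + X ^ δ * G) - P) by ring] at h
    exact (mul_dvd_mul_iff_left (pow_ne_zero _ X_ne_zero)).mp h
  refine eq_of_X_pow_dvd_sub ?_ ((natDegree_C_mul_le _ _).trans_lt hσ) hPG
  have hsplit : C (u ^ 2) * σ - P * (C u - X ^ δ * G)
      = (σ * (C u + X ^ δ * G) - P) * (C u - X ^ δ * G) + X ^ (2 * δ) * (σ * G ^ 2) := by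
    rw [map_pow]; ring
  rw [hsplit]
  exact dvd_add (h'.mul_right _) (dvd_mul_right _ _)

theorem card_le_natDegree_of_eval_eq_zero {p : K[X]} (hp : p ≠ 0) {f : ι → K}
    (hinj : Set.InjOn f s) (hroot : ∀ i ∈ s, p.eval (f i) = 0) : #s ≤ p.natDegree := by
  classical
  rw [← card_image_of_injOn hinj]
  refine card_le_degree_of_subset_roots fun z hz => ?_
  obtain ⟨i, hi, rfl⟩ := mem_image.mp hz
  exact (mem_roots hp).mpr (hroot i hi)

theorem eval_inv_errorLocator {x : ι → K} {j : ι} (hj : j ∈ s) (hx : x j ≠ 0) :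
    (errorLocator s x).eval (x j)⁻¹ = 0 := by
  rw [errorLocator, eval_prod]
  exact prod_eq_zero hj (by simp [mul_inv_cancel₀ hx])

theorem eval_inv_eq_zero_of_C_mul_errorLocator_eq {x : ι → K} {P Q : K[X]} {c : K} {i : ι}
    (h : C c * errorLocator s x = P * Q) (hi : i ∈ s) (hx : x i ≠ 0)
    (hP : P.eval (x i)⁻¹ ≠ 0) : Q.eval (x i)⁻¹ = 0 := by
  have h' := congrArg (eval (x i)⁻¹) h
  rw [eval_mul, eval_mul, eval_inv_errorLocator hi hx, mul_zero, eq_comm, mul_eq_zero] at h'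
  exact h'.resolve_left hP

variable [DecidableEq ι]

theorem eval_inv_errorEvaluator_ne_zero {x : ι → K} {j : ι} (a : ι → K)
    (hx : ∀ k ∈ s, x k ≠ 0) (hinj : Set.InjOn x s) (hj : j ∈ s) (ha : a j ≠ 0) :
    (errorEvaluator s a x).eval (x j)⁻¹ ≠ 0 := by
  have hxj := mul_inv_cancel₀ (hx j hj)
  rw [errorEvaluator, eval_finsetSum, sum_eq_single_of_mem j hj]
  · simp only [eval_mul, eval_C, eval_prod, eval_sub, eval_one, eval_X]
    refine mul_ne_zero ha (prod_ne_zero_iff.mpr fun k hk hk0 => ne_of_mem_erase hk ?_)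
    exact hinj (mem_of_mem_erase hk) hj
      ((mul_inv_eq_one₀ (hx j hj)).mp (sub_eq_zero.mp hk0).symm)
  · intro i _ hij
    simp only [eval_mul, eval_C, eval_prod]
    exact mul_eq_zero_of_right _
      (prod_eq_zero (mem_erase.mpr ⟨Ne.symm hij, hj⟩) (by simp [hxj]))

theorem two_mul_le_card_of_powerSum_eq_zero {a x : ι → K} {k δ t : ℕ}
    (ht : 1 ≤ t) (htδ : t ≤ δ) (hk : δ + t ≤ k + 1)
    (hx : ∀ j ∈ s, x j ≠ 0) (hinj : Set.InjOn x s) (ha : ∀ j ∈ s, a j ≠ 0) (hs : s.Nonempty)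
    (hS : ∀ e < k + 2 * δ, e ≠ k → (e < k + δ ∨ k + δ + t ≤ e) → powerSum s a x e = 0) :
    2 * δ ≤ #s := by
  by_contra! hcard
  set u := powerSum s a x k
  set G := ∑ l ∈ range t, C (powerSum s a x (k + δ + l)) * X ^ l
  have hkey := X_pow_dvd_errorLocator_mul_sub_errorEvaluator s a x (k + 2 * δ)
  rw [sum_range_C_mul_X_pow_eq_of_gaps (by omega) htδ hS] at hkey
  have hΩ : ∀ j ∈ s, (errorEvaluator s a x).eval (x j)⁻¹ ≠ 0 :=
    fun j hj => eval_inv_errorEvaluator_ne_zero a hx hinj hj (ha j hj)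
  have hΩ0 : errorEvaluator s a x ≠ 0 := fun h => hΩ _ hs.choose_spec (by simp [h])
  have hΩdeg := natDegree_errorEvaluator_lt s a x hs
  have hdvdΩ : ∀ m ≤ k + 2 * δ, X ^ m ∣ C u * X ^ k + X ^ (k + δ) * G →
      X ^ m ∣ errorEvaluator s a x := fun m hm hT =>
    (dvd_sub_right (dvd_mul_of_dvd_right hT _)).mp ((pow_dvd_pow X hm).trans hkey)
  by_cases hu : u = 0
  · have := natDegree_le_of_dvd (hdvdΩ (k + δ) (by omega) (by simp [hu])) hΩ0
    rw [natDegree_X_pow] at this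
    omega
  obtain ⟨P, hP⟩ := hdvdΩ k (by omega)
    (dvd_add (dvd_mul_left _ _) ((pow_dvd_pow X (by omega)).mul_right _))
  rw [hP] at hkey hΩ hΩ0 hΩdeg
  simp only [eval_mul] at hΩ
  rw [natDegree_X_pow_mul k (right_ne_zero_of_mul hΩ0)] at hΩdeg
  have hGdeg : G.natDegree ≤ t - 1 := natDegree_sum_le_of_forall_le _ _ fun l hl =>
    (natDegree_C_mul_X_pow_le _ _).trans (by simp only [mem_range] at hl; omega)
  set D := C u - X ^ δ * G
  have hDdeg : D.natDegree ≤ k := (natDegree_sub_le _ _).trans <| max_le (by simp) <|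
    natDegree_mul_le.trans (by rw [natDegree_X_pow]; omega)
  have hD0 : D ≠ 0 := fun h => hu <| by
    simpa [D, coeff_X_pow_mul', show 0 ≠ δ by omega] using congrArg (coeff · 0) h
  have hfactor : C (u ^ 2) * errorLocator s x = P * D :=
    C_sq_mul_eq_of_X_pow_dvd hkey ((natDegree_errorLocator_le s x).trans_lt hcard)
      (natDegree_mul_le.trans_lt (by omega : P.natDegree + D.natDegree < 2 * δ))
  have hroot : ∀ i ∈ s, D.eval (x i)⁻¹ = 0 := fun i hi =>
    eval_inv_eq_zero_of_C_mul_errorLocator_eq hfactor hi (hx i hi) (right_ne_zero_of_mul (hΩ i hi))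
  have := card_le_natDegree_of_eval_eq_zero hD0
    (fun i hi j hj h => hinj hi hj (inv_injective h)) hroot
  omega

end Field

theorem powerSum_support_eq_sum_zpow {K : Type*} [Field K] [DecidableEq K] {n : ℕ} {ξ : K}
    (hξ : ξ ≠ 0) (c : Fin n → K) (i₀ : ℤ) (e : ℕ) :
    powerSum {l | c l ≠ 0} (fun l => c l * ξ ^ (i₀ * l)) (fun l => ξ ^ (l : ℕ)) e
      = ∑ l, c l * ξ ^ ((i₀ + e) * l) := by
  rw [powerSum, sum_filter_of_ne fun l _ h => left_ne_zero_of_mul (left_ne_zero_of_mul h)]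
  refine sum_congr rfl fun l _ => ?_
  rw [add_mul, zpow_add₀ hξ, ← pow_mul, mul_assoc, mul_comm (e : ℤ), ← Nat.cast_mul, zpow_natCast]

theorem s_eq_one_bound_general
    (δ t : ℕ) (ht1 : 1 ≤ t) (ht2 : t ≤ δ - 1)
    {K : Type*} [Field K] [DecidableEq K] (n : ℕ)
    (ξ : K) (hξ : IsPrimitiveRoot ξ n) (i₀ : ℤ)
    (c : Fin n → K) (hc : c ≠ 0)
    (hzero : ∀ e ∈ (Finset.Icc 0 (δ + t - 2) ∪
        Finset.Icc (δ + t) (2 * δ + t - 2) ∪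
        Finset.Icc (2 * δ + 2 * t - 1) (3 * δ + t - 2)),
      ∑ l : Fin n, c l * ξ ^ ((i₀ + (e : ℤ)) * (l : ℕ)) = 0) :
    2 * δ ≤ hammingNorm c := by
  obtain ⟨j, hj⟩ := Function.ne_iff.mp hc
  have hξ0 : ξ ≠ 0 := hξ.ne_zero j.pos.ne'
  refine two_mul_le_card_of_powerSum_eq_zero (k := δ + t - 1) (t := t)
    (a := fun l => c l * ξ ^ (i₀ * l)) (x := fun l : Fin n => ξ ^ (l : ℕ)) ht1 (by omega)
    (by omega) (fun _ _ => pow_ne_zero _ hξ0)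
    (fun l _ m _ h => Fin.ext (hξ.pow_inj l.isLt m.isLt h))
    (fun l hl => mul_ne_zero (mem_filter.mp hl).2 (zpow_ne_zero _ hξ0))
    ⟨j, mem_filter.mpr ⟨mem_univ _, hj⟩⟩ fun e he hek hgap => ?_
  rw [powerSum_support_eq_sum_zpow hξ0]
  exact hzero e (by simp only [mem_union, mem_Icc]; omega)

/-- Theorem 9 (the `s = 1` case of the main bound): pattern
`(0)^{δ+t-1}(Δ)^1(0)^{δ-1}(Δ)^t(0)^{δ-t}` gives minimum distance at least `2δ`. -/
theorem s_eq_one_bound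
    (δ t : ℕ) (hδ : 2 ≤ δ) (ht1 : 1 ≤ t) (ht2 : t ≤ δ - 1)
    {K : Type*} [Field K] [DecidableEq K] (n : ℕ)
    (hn : 3 * δ + t - 1 ≤ n)
    (ξ : K) (hξ : IsPrimitiveRoot ξ n) (i₀ : ℤ)
    (c : Fin n → K) (hc : c ≠ 0)
    (hzero : ∀ e ∈ (Finset.Icc 0 (δ + t - 2) ∪
        Finset.Icc (δ + t) (2 * δ + t - 2) ∪
        Finset.Icc (2 * δ + 2 * t - 1) (3 * δ + t - 2)),
      ∑ l : Fin n, c l * ξ ^ ((i₀ + (e : ℤ)) * (l : ℕ)) = 0) :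
    2 * δ ≤ hammingNorm c :=
  s_eq_one_bound_general δ t ht1 ht2 n ξ hξ i₀ c hc hzero
end

section
/- Let F be a finite field with q elements, δ ≥ 2 and ρ ≥ 1 integers, and n = ρ(δ+1). Let C ⊆ F^n be a linear code of dimension k ≥ 1 that has disjoint local repair groups with r = 2: there is a partition of {0,…,n−1} into ρ blocks each of size δ+1 such that for each block S, the punctured code C|_S = {c|_S : c ∈ C} has dimension 2 and every nonzero element of C|_S has Hamming weight at least δ. If 2δ + 1 = n − k − (⌈k/2⌉ − 1)(δ−1) + 1 and n > q + 1, then the minimum Hamming weight d of a nonzero codeword of C satisfies d ≤ 2δ. -/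
/-!
A nonzero word of a `[δ + 1, 2, δ]` local code vanishes in at most one position, so for every
coordinate `i` there is a word `u i` of the local code of the block of `i`, extended by zero, whose
support is exactly that block minus `i`; it has weight `δ`. All `u i` lie in the sum `W` of the
local codes, of dimension at most `2ρ`, and the optimality equation forces `k = 2ρ - 2`. So
`W ⧸ C` has dimension at most two, its projective line has at most `q + 1 < n` points, and two
distinct `u i`, `u j` are proportional modulo `C`: `u j - c • u i` is a codeword of weight at most
`2δ`, nonzero because distinct coordinates give distinct supports.
-/

open Module
open scoped LinearAlgebra.Projectivization

theorem hammingNorm_sub_le {ι : Type*} [Fintype ι] {β : ι → Type*} [∀ i, AddGroup (β i)]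
    [∀ i, DecidableEq (β i)] (x y : ∀ i, β i) :
    hammingNorm (x - y) ≤ hammingNorm x + hammingNorm y := by
  have hdist : hammingDist x y = hammingNorm (x - y) := by
    simp [hammingDist, hammingNorm, sub_eq_zero]
  rw [← hdist, ← hammingDist_zero_right x, ← hammingDist_zero_left]
  exact hammingDist_triangle x 0 y

theorem hammingNorm_eq_card_of_forall_ne_zero_iff {ι β : Type*} [Fintype ι] [Zero β]
    [DecidableEq β] {x : ι → β} {s : Finset ι} (h : ∀ t, x t ≠ 0 ↔ t ∈ s) :
    hammingNorm x = s.card := by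
  rw [hammingNorm]
  congr 1
  ext t
  simp [h]

theorem eq_of_apply_eq_zero_of_card_le_hammingNorm_add_one {s β : Type*} [Fintype s] [Zero β]
    [DecidableEq β] [DecidableEq s] {v : s → β} (hv : Fintype.card s ≤ hammingNorm v + 1)
    {i j : s} (hi : v i = 0) (hj : v j = 0) : i = j := by
  by_contra hij
  have hsub : Finset.univ.filter (v · ≠ 0) ⊆ ({i, j} : Finset s)ᶜ := by
    intro t ht
    simp only [Finset.mem_filter, Finset.mem_univ, true_and] at ht
    simp only [Finset.mem_compl, Finset.mem_insert, Finset.mem_singleton]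
    rintro (rfl | rfl) <;> contradiction
  have := Finset.card_le_card hsub
  have hpair := Finset.card_le_univ ({i, j} : Finset s)
  rw [Finset.card_compl] at this
  rw [Finset.card_pair hij] at this hpair
  rw [hammingNorm] at hv
  omega

theorem Projectivization.card_le_of_finrank_le_two {K V : Type*} [Field K] [Finite K]
    [AddCommGroup V] [Module K V] (h : finrank K V ≤ 2) :
    Nat.card (ℙ K V) ≤ Nat.card K + 1 := by
  rw [card_of_finrank K V rfl]
  interval_cases finrank K V <;> simp

theorem exists_ne_eq_smul_of_finrank_le_two {K V ι : Type*} [Field K] [Finite K]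
    [AddCommGroup V] [Module K V] [Finite V] [Finite ι] (h : finrank K V ≤ 2)
    (hcard : Nat.card K + 1 < Nat.card ι) (x : ι → V) :
    ∃ i j, i ≠ j ∧ ∃ c : K, x j = c • x i := by
  by_cases hzero : ∃ j, x j = 0
  · obtain ⟨j, hj⟩ := hzero
    have : Nontrivial ι := Finite.one_lt_card_iff_nontrivial.mp (by omega)
    obtain ⟨i, hij⟩ := exists_ne j
    exact ⟨i, j, hij, 0, by rw [hj, zero_smul]⟩
  push Not at hzero
  have : Finite (ℙ K V) := (Projectivization.finite_iff_of_finite K V).mpr inferInstance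
  obtain ⟨i, j, hmk, hij⟩ := Function.not_injective_iff.mp fun hinj =>
    (Nat.card_le_card_of_injective _ hinj).not_gt <|
      (Projectivization.card_le_of_finrank_le_two h).trans_lt hcard
  obtain ⟨c, hc⟩ := (Projectivization.mk_eq_mk_iff' K (x i) (x j) (hzero i) (hzero j)).mp hmk
  exact ⟨j, i, hij.symm, c, hc.symm⟩

theorem Submodule.exists_ne_sub_smul_mem_of_finrank_le_add_two {K V ι : Type*} [Field K]
    [Finite K] [AddCommGroup V] [Module K V] [Finite ι] {C W : Submodule K V}
    [FiniteDimensional K W] (hCW : C ≤ W) (hdim : finrank K W ≤ finrank K C + 2)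
    (hcard : Nat.card K + 1 < Nat.card ι) {x : ι → V} (hx : ∀ i, x i ∈ W) :
    ∃ i j, i ≠ j ∧ ∃ c : K, x j - c • x i ∈ C := by
  set C' := C.comap W.subtype
  have hC' : finrank K C' = finrank K C := (Submodule.comapSubtypeEquivOfLe hCW).finrank_eq
  have hQ : finrank K (W ⧸ C') ≤ 2 := by
    have := C'.finrank_quotient_add_finrank
    omega
  have : Finite (W ⧸ C') := Module.finite_of_finite K
  obtain ⟨i, j, hij, c, hc⟩ :=
    exists_ne_eq_smul_of_finrank_le_two hQ hcard fun i => C'.mkQ ⟨x i, hx i⟩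
  refine ⟨i, j, hij, c, ?_⟩
  have : C'.mkQ (⟨x j, hx j⟩ - c • ⟨x i, hx i⟩) = 0 := by rw [map_sub, map_smul, hc, sub_self]
  simpa [C'] using (Submodule.Quotient.mk_eq_zero _).mp this

section LocalCodes

variable {F ι κ : Type*} [Field F]

def localCode (C : Submodule F (ι → F)) (s : Finset ι) : Submodule F (s → F) :=
  C.map (LinearMap.funLeft F F (fun i : s => (i : ι)))

/-- When the blocks partition `ι`, this is the direct sum of the local codes. -/
def localCodeSum (C : Submodule F (ι → F)) (B : κ → Finset ι) : Submodule F (ι → F) :=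
  ⨅ a, (localCode C (B a)).comap (LinearMap.funLeft F F (fun i : B a => (i : ι)))

variable {C : Submodule F (ι → F)} {B : κ → Finset ι}

theorem mem_localCodeSum {w : ι → F} :
    w ∈ localCodeSum C B ↔ ∀ a, (fun t : B a => w t) ∈ localCode C (B a) := by
  simp only [localCodeSum, Submodule.mem_iInf, Submodule.mem_comap]
  rfl

theorem le_localCodeSum : C ≤ localCodeSum C B :=
  le_iInf fun _ => Submodule.le_comap_map _ _

theorem finrank_localCodeSum_le [Finite ι] [Fintype κ] (hcover : ∀ i, ∃ a, i ∈ B a) :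
    finrank F (localCodeSum C B) ≤ ∑ a, finrank F (localCode C (B a)) := by
  let Φ : localCodeSum C B →ₗ[F] ∀ a, localCode C (B a) := LinearMap.pi fun a =>
    ((LinearMap.funLeft F F (fun i : B a => (i : ι))).comp (localCodeSum C B).subtype).codRestrict
      _ fun w => mem_localCodeSum.mp w.2 a
  have hΦ : Function.Injective Φ := by
    intro w w' h
    ext i
    obtain ⟨a, hi⟩ := hcover i
    exact congrArg (fun f => (f a : B a → F) ⟨i, hi⟩) h
  rw [← Module.finrank_pi_fintype]
  exact LinearMap.finrank_le_finrank_of_injective hΦ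

theorem indicator_mem_localCodeSum (hdisj : ∀ a b, a ≠ b → Disjoint (B a) (B b))
    {c : ι → F} (hc : c ∈ C) (a : κ) : (B a : Set ι).indicator c ∈ localCodeSum C B := by
  rw [mem_localCodeSum]
  intro b
  by_cases hba : b = a
  · subst hba
    exact ⟨c, hc, funext fun t => (Set.indicator_of_mem t.2 c).symm⟩
  · have hzero : (fun t : B b => (B a : Set ι).indicator c t) = 0 := funext fun t =>
      Set.indicator_of_notMem (Finset.disjoint_left.mp (hdisj b a hba) t.2) c
    rw [hzero]
    exact zero_mem _

theorem exists_mem_apply_eq_zero_of_one_lt_finrank {s : Finset ι}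
    (hdim : 1 < finrank F (localCode C s)) {i : ι} (hi : i ∈ s) :
    ∃ c ∈ C, c i = 0 ∧ (fun t : s => c t) ≠ 0 := by
  let ev : localCode C s →ₗ[F] F := (LinearMap.proj ⟨i, hi⟩).comp (localCode C s).subtype
  obtain ⟨⟨v, hv⟩, hker, hv0⟩ := Submodule.exists_mem_ne_zero_of_ne_bot
    (ev.ker_ne_bot_of_finrank_lt (by rwa [finrank_self]))
  obtain ⟨c, hc, rfl⟩ := hv
  exact ⟨c, hc, hker, fun h => hv0 (Subtype.ext h)⟩

variable [DecidableEq ι]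

theorem exists_mem_localCodeSum_support_eq_erase [DecidableEq F]
    (hdisj : ∀ a b, a ≠ b → Disjoint (B a) (B b)) {a : κ} {i : ι} (hi : i ∈ B a)
    (hdim : 1 < finrank F (localCode C (B a)))
    (hmds : ∀ v ∈ localCode C (B a), v ≠ 0 → (B a).card ≤ hammingNorm v + 1) :
    ∃ u ∈ localCodeSum C B, ∀ t, u t ≠ 0 ↔ t ∈ (B a).erase i := by
  obtain ⟨c, hc, hci, hc0⟩ := exists_mem_apply_eq_zero_of_one_lt_finrank hdim hi
  refine ⟨(B a : Set ι).indicator c, indicator_mem_localCodeSum hdisj hc a, fun t => ?_⟩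
  by_cases ht : t ∈ B a
  · rw [Set.indicator_of_mem ht, Finset.mem_erase, and_iff_left ht]
    refine ⟨fun hct hti => hct (hti ▸ hci), fun hti hct => hti ?_⟩
    have hcard : Fintype.card (B a) ≤ hammingNorm (fun s : B a => c s) + 1 := by
      rw [Fintype.card_coe]
      exact hmds _ ⟨c, hc, rfl⟩ hc0
    exact congrArg Subtype.val (eq_of_apply_eq_zero_of_card_le_hammingNorm_add_one hcard
      (i := ⟨t, ht⟩) (j := ⟨i, hi⟩) hct hci)
  · simp [Set.indicator_of_notMem, ht]

theorem eq_of_erase_eq_erase (hdisj : ∀ a b, a ≠ b → Disjoint (B a) (B b)) {a b : κ} {i j : ι}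
    (hi : i ∈ B a) (hj : j ∈ B b) (hcard : 2 ≤ (B a).card) (h : (B a).erase i = (B b).erase j) :
    i = j := by
  obtain ⟨t, ht⟩ : ((B a).erase i).Nonempty := by
    rw [← Finset.card_pos, Finset.card_erase_of_mem hi]
    omega
  obtain rfl : a = b := by
    by_contra hab
    exact Finset.disjoint_left.mp (hdisj a b hab) (Finset.mem_of_mem_erase ht)
      (Finset.mem_of_mem_erase (h ▸ ht))
  by_contra hij
  have hj' : j ∈ (B a).erase i := Finset.mem_erase.mpr ⟨Ne.symm hij, hj⟩
  simp [h] at hj'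

theorem eq_of_eq_smul_of_support_eq_erase (hdisj : ∀ a b, a ≠ b → Disjoint (B a) (B b))
    (hcard : ∀ a, 2 ≤ (B a).card) {a b : κ} {i j : ι} (hi : i ∈ B a) (hj : j ∈ B b)
    {u v : ι → F} (hu : ∀ t, u t ≠ 0 ↔ t ∈ (B a).erase i)
    (hv : ∀ t, v t ≠ 0 ↔ t ∈ (B b).erase j) {c : F} (h : v = c • u) : i = j := by
  obtain ⟨t, ht⟩ : ((B b).erase j).Nonempty := by
    rw [← Finset.card_pos, Finset.card_erase_of_mem hj]
    have := hcard b
    omega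
  have hc : c ≠ 0 := by
    rintro rfl
    exact (hv t).mpr ht (by simp [h])
  refine eq_of_erase_eq_erase hdisj hi hj (hcard a) (Finset.ext fun t => ?_)
  rw [← hu, ← hv, h, Pi.smul_apply, smul_eq_mul, mul_ne_zero_iff, and_iff_right hc]

end LocalCodes

theorem add_two_eq_two_mul_of_singleton_like_bound_eq (δ ρ n k : ℕ) (hδ : 1 ≤ δ)
    (hn : n = ρ * (δ + 1))
    (hopt : ((2 * δ + 1 : ℕ) : ℤ) = (n : ℤ) - (k : ℤ) -
      ((((k + 1) / 2 : ℕ) : ℤ) - 1) * ((δ : ℤ) - 1) + 1) :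
    k + 2 = 2 * ρ := by
  subst hn
  set m := (k + 1) / 2 with hm
  have hkm : k = 2 * m ∨ k + 1 = 2 * m := by omega
  push_cast at hopt
  -- `hopt` says `(ρ - m - 1) (δ + 1) = k - 2m ∈ {-1, 0}`, and `δ + 1 ≥ 2`
  have key : ((ρ : ℤ) - m - 1) * ((δ : ℤ) + 1) = (k : ℤ) - 2 * m := by linear_combination -hopt
  rcases hkm with hkm | hkm
  · have hρ : (ρ : ℤ) - m - 1 = 0 := by
      rw [hkm] at key
      push_cast at key
      simpa [sub_self, mul_eq_zero, show (δ : ℤ) + 1 ≠ 0 by omega] using key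
    omega
  · exfalso
    have key' : ((ρ : ℤ) - m - 1) * ((δ : ℤ) + 1) = -1 := by rw [key]; omega
    rcases le_or_gt 0 ((ρ : ℤ) - m - 1) with h | h <;> nlinarith

theorem corollary_three_distance_upper_bound_general
    {F : Type*} [Field F] [Fintype F] [DecidableEq F]
    (q δ ρ n : ℕ) (hq : Fintype.card F = q) (hδ : 2 ≤ δ)
    (hn : n = ρ * (δ + 1))
    (C : Submodule F (Fin n → F))
    (k : ℕ) (hk : k = Module.finrank F ↥C)
    (d : ℕ)
    (hd2 : ∀ c ∈ C, c ≠ 0 → d ≤ hammingNorm c)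
    -- disjoint local repair groups with r = 2:
    (B : Fin ρ → Finset (Fin n))
    (hdisj : ∀ a b, a ≠ b → Disjoint (B a) (B b))
    (hcover : ∀ i : Fin n, ∃ a, i ∈ B a)
    (hcard : ∀ a, (B a).card = δ + 1)
    (hdim : ∀ a, Module.finrank F
      ↥(C.map (LinearMap.funLeft F F (fun i : ↥(B a) => (i : Fin n)))) = 2)
    (hmds : ∀ a, ∀ v ∈ C.map (LinearMap.funLeft F F (fun i : ↥(B a) => (i : Fin n))),
      v ≠ 0 → δ ≤ hammingNorm v)
    (hopt : ((2 * δ + 1 : ℕ) : ℤ) = (n : ℤ) - (k : ℤ) -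
      ((((k + 1) / 2 : ℕ) : ℤ) - 1) * ((δ : ℤ) - 1) + 1)
    (hbig : q + 1 < n) :
    d ≤ 2 * δ := by
  have hkρ := add_two_eq_two_mul_of_singleton_like_bound_eq δ ρ n k (by omega) hn hopt
  have hdim' : ∀ a, finrank F (localCode C (B a)) = 2 := hdim
  have hW : finrank F (localCodeSum C B) ≤ finrank F C + 2 := by
    have := finrank_localCodeSum_le (C := C) hcover
    simp only [hdim', Finset.sum_const, Finset.card_univ, Fintype.card_fin, smul_eq_mul] at this
    omega
  choose A hA using hcover
  choose u huW hu using fun i => exists_mem_localCodeSum_support_eq_erase hdisj (hA i)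
    (by rw [hdim']; norm_num) fun v hv hv0 => by
      have := hmds (A i) v hv hv0
      rw [hcard]
      omega
  have hnorm : ∀ i, hammingNorm (u i) = δ := fun i => by
    rw [hammingNorm_eq_card_of_forall_ne_zero_iff (hu i), Finset.card_erase_of_mem (hA i),
      hcard, Nat.add_sub_cancel]
  obtain ⟨i, j, hij, c, hcC⟩ := Submodule.exists_ne_sub_smul_mem_of_finrank_le_add_two
    le_localCodeSum hW (by simpa [hq] using hbig) huW
  have hne : u j - c • u i ≠ 0 := fun h => hij <| eq_of_eq_smul_of_support_eq_erase hdisj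
    (fun a => by rw [hcard]; omega) (hA i) (hA j) (hu i) (hu j) (sub_eq_zero.mp h)
  calc d ≤ hammingNorm (u j - c • u i) := hd2 _ hcC hne
    _ ≤ hammingNorm (u j) + hammingNorm (c • u i) := hammingNorm_sub_le _ _
    _ ≤ hammingNorm (u j) + hammingNorm (u i) := by gcongr; exact hammingNorm_smul_le_hammingNorm
    _ = 2 * δ := by rw [hnorm, hnorm]; ring

/-- Corollary 3: a `(2,δ)`-LRC with disjoint local repair groups of length
`n > q+1` whose Singleton-like bound equals `2δ+1` has minimum distance at most
`2δ`. -/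
theorem corollary_three_distance_upper_bound
    {F : Type*} [Field F] [Fintype F] [DecidableEq F]
    (q δ ρ n : ℕ) (hq : Fintype.card F = q) (hδ : 2 ≤ δ) (hρ : 1 ≤ ρ)
    (hn : n = ρ * (δ + 1))
    (C : Submodule F (Fin n → F))
    (k : ℕ) (hk : k = Module.finrank F ↥C) (hk1 : 1 ≤ k)
    (d : ℕ)
    (hd1 : ∃ c ∈ C, c ≠ 0 ∧ hammingNorm c = d)
    (hd2 : ∀ c ∈ C, c ≠ 0 → d ≤ hammingNorm c)
    -- disjoint local repair groups with r = 2: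
    (B : Fin ρ → Finset (Fin n))
    (hdisj : ∀ a b, a ≠ b → Disjoint (B a) (B b))
    (hcover : ∀ i : Fin n, ∃ a, i ∈ B a)
    (hcard : ∀ a, (B a).card = δ + 1)
    (hdim : ∀ a, Module.finrank F
      ↥(C.map (LinearMap.funLeft F F (fun i : ↥(B a) => (i : Fin n)))) = 2)
    (hmds : ∀ a, ∀ v ∈ C.map (LinearMap.funLeft F F (fun i : ↥(B a) => (i : Fin n))),
      v ≠ 0 → δ ≤ hammingNorm v)
    (hopt : ((2 * δ + 1 : ℕ) : ℤ) = (n : ℤ) - (k : ℤ) -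
      ((((k + 1) / 2 : ℕ) : ℤ) - 1) * ((δ : ℤ) - 1) + 1)
    (hbig : q + 1 < n) :
    d ≤ 2 * δ :=
  corollary_three_distance_upper_bound_general q δ ρ n hq hδ hn C k hk d hd2 B hdisj hcover hcard
    hdim hmds hopt hbig
end
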